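/- arXiv:2305.06584 — 7 statements merged into one kernel-verified Lean document; each statement's English description precedes it below -/
import Mathlib

section
/- Let c₁, c₂ ∈ W* be two cost vectors. If ‖c₁ − c₂‖ < max{ν_S(c₁), ν_S(c₂)}, then the optimal solution sets coincide and are a common singleton: there exists w ∈ S such that Opt(c₁) = Opt(c₂) = {w}. In particular, any linear optimization oracle w* satisfies w*(c₁) = w*(c₂), i.e., the optimal decisions for c₁ and c₂ are the same. -/
open MeasureTheory

variable {W : Type*} [NormedAddCommGroup W] [NormedSpace ℝ W] [FiniteDimensional ℝ W]

/-- The set of optimal solutions of the linear optimization problem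
`min_{w ∈ conv V} c w`, for a cost vector `c` in the dual of `W`. -/
def Opt (V : Set W) (c : W →L[ℝ] ℝ) : Set W :=
  {w ∈ convexHull ℝ V | ∀ w' ∈ convexHull ℝ V, c w ≤ c w'}

/-- The set of degenerate cost vectors: those with at least two distinct optimal solutions. -/
def Degen (V : Set W) : Set (W →L[ℝ] ℝ) :=
  {c | ∃ w₁ ∈ Opt V c, ∃ w₂ ∈ Opt V c, w₁ ≠ w₂}

/-- The distance to degeneracy `ν_S`. -/
noncomputable def nuS (V : Set W) (c : W →L[ℝ] ℝ) : ℝ :=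
  Metric.infDist c (Degen V)

lemma mem_Opt_iff {V : Set W} {c : W →L[ℝ] ℝ} {w : W} (hw : w ∈ convexHull ℝ V) :
    w ∈ Opt V c ↔ ∀ v ∈ V, c w ≤ c v := by
  constructor
  · rintro ⟨-, h⟩ v hv
    exact h v (subset_convexHull ℝ V hv)
  · intro hle
    refine ⟨hw, fun w' hw' => ?_⟩
    have hsub : convexHull ℝ V ⊆ {x | c w ≤ c x} :=
      convexHull_min hle (convex_halfSpace_ge (c.toLinearMap.isLinear) (c w))
    exact hsub hw'

lemma opt_vertex (V : Set W) (hVfin : V.Finite) (hVne : V.Nonempty) (c : W →L[ℝ] ℝ) :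
    ∃ v ∈ V, v ∈ Opt V c := by
  obtain ⟨v, hvV, hmin⟩ := Set.exists_min_image V c hVfin hVne
  exact ⟨v, hvV, (mem_Opt_iff (subset_convexHull ℝ V hvV)).2 hmin⟩

lemma opt_strict {V : Set W} {c : W →L[ℝ] ℝ} (hc : c ∉ Degen V) {w : W} (hw : w ∈ Opt V c)
    {u : W} (hu : u ∈ V) (hne : u ≠ w) : c w < c u := by
  have huh : u ∈ convexHull ℝ V := subset_convexHull ℝ V hu
  have hle : c w ≤ c u := hw.2 u huh
  rcases lt_or_eq_of_le hle with hlt | heq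
  · exact hlt
  · exact absurd ⟨w, hw, u, ⟨huh, fun w' hw' => heq ▸ hw.2 w' hw'⟩, hne.symm⟩ hc

lemma opt_eq_singleton {V : Set W} {c : W →L[ℝ] ℝ} (hc : c ∉ Degen V) {w : W}
    (hw : w ∈ Opt V c) : Opt V c = {w} := by
  refine Set.eq_singleton_iff_unique_mem.2 ⟨hw, fun x hx => ?_⟩
  by_contra hne
  exact hc ⟨x, hx, w, hw, hne⟩

lemma key (V : Set W) (hVfin : V.Finite) (hVne : V.Nonempty)
    (c₁ c₂ : W →L[ℝ] ℝ) (h : ‖c₁ - c₂‖ < nuS V c₁) :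
    ∃ w ∈ convexHull ℝ V, Opt V c₁ = {w} ∧ Opt V c₂ = {w} := by
  set d := c₂ - c₁ with hd
  set ct : ℝ → (W →L[ℝ] ℝ) := fun t => c₁ + t • d with hct
  -- nondegeneracy along the segment
  have hnd : ∀ t : ℝ, t ∈ Set.Icc (0:ℝ) 1 → ct t ∉ Degen V := by
    intro t ht hmem
    have hdist : dist c₁ (ct t) = |t| * ‖d‖ := by
      show dist c₁ (c₁ + t • d) = _
      rw [dist_self_add_right, ← Real.norm_eq_abs]
      exact norm_smul t d
    have h1 : |t| * ‖d‖ ≤ ‖d‖ := by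
      have : |t| ≤ 1 := abs_le.2 ⟨by linarith [ht.1], ht.2⟩
      nlinarith [norm_nonneg d]
    have h2 : ‖d‖ = ‖c₁ - c₂‖ := norm_sub_rev _ _
    have hmd : Metric.infDist c₁ (Degen V) ≤ |t| * ‖d‖ := by
      rw [← hdist]; exact Metric.infDist_le_dist_of_mem hmem
    have : nuS V c₁ ≤ ‖c₁ - c₂‖ := by
      calc nuS V c₁ ≤ |t| * ‖d‖ := hmd
        _ ≤ ‖d‖ := h1
        _ = ‖c₁ - c₂‖ := h2
    linarith
  have hct0 : ct 0 = c₁ := by simp [hct]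
  have hct1 : ct 1 = c₂ := by simp [hct, hd]
  obtain ⟨w, hwV, hwOpt⟩ := opt_vertex V hVfin hVne c₁
  have hwHull : w ∈ convexHull ℝ V := subset_convexHull ℝ V hwV
  -- the set of parameters where w remains optimal
  haveI : ConnectedSpace (Set.Icc (0:ℝ) 1) :=
    Subtype.connectedSpace ⟨⟨0, by norm_num⟩, isPreconnected_Icc⟩
  set T : Set (Set.Icc (0:ℝ) 1) := {t | w ∈ Opt V (ct t)} with hT
  have hTclosed : IsClosed T := by
    have : T = ⋂ v ∈ V, {t : Set.Icc (0:ℝ) 1 | ct t w ≤ ct t v} := by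
      ext t
      simp only [hT, Set.mem_setOf_eq, Set.mem_iInter]
      exact mem_Opt_iff hwHull
    rw [this]
    refine isClosed_biInter fun v hv => isClosed_le ?_ ?_
    · exact Continuous.add continuous_const
        ((continuous_subtype_val.mul continuous_const))
    · exact Continuous.add continuous_const
        ((continuous_subtype_val.mul continuous_const))
  have hTopen : IsOpen T := by
    rw [isOpen_iff_mem_nhds]
    intro t ht
    have hstrict : ∀ u ∈ V, u ≠ w → ct t w < ct t u :=
      fun u hu hne => opt_strict (hnd t t.2) ht hu hne
    have hev : ∀ᶠ s : Set.Icc (0:ℝ) 1 in nhds t, ∀ u ∈ V, u ≠ w → ct s w < ct s u := by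
      rw [Filter.eventually_all_finite hVfin]
      intro u hu
      by_cases hne : u = w
      · simp [hne]
      · have hcw : Continuous fun s : Set.Icc (0:ℝ) 1 => ct s w :=
          Continuous.add continuous_const (continuous_subtype_val.mul continuous_const)
        have hcu : Continuous fun s : Set.Icc (0:ℝ) 1 => ct s u :=
          Continuous.add continuous_const (continuous_subtype_val.mul continuous_const)
        have := ContinuousAt.eventually_lt hcw.continuousAt hcu.continuousAt
          (hstrict u hu hne)
        filter_upwards [this] with s hs _ using hs
    filter_upwards [hev] with s hs
    refine (mem_Opt_iff hwHull).2 fun v hv => ?_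
    by_cases hne : v = w
    · simp [hne]
    · exact le_of_lt (hs v hv hne)
  have hT0 : (⟨0, by norm_num⟩ : Set.Icc (0:ℝ) 1) ∈ T := by
    simp only [hT, Set.mem_setOf_eq, hct0]; exact hwOpt
  have hTuniv : T = Set.univ :=
    (isClopen_iff.1 ⟨hTclosed, hTopen⟩).resolve_left (Set.nonempty_iff_ne_empty.1 ⟨_, hT0⟩)
  have hT1 : w ∈ Opt V c₂ := by
    have : (⟨1, by norm_num⟩ : Set.Icc (0:ℝ) 1) ∈ T := hTuniv ▸ Set.mem_univ _
    simpa only [hT, Set.mem_setOf_eq, hct1] using this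
  have hc₁nd : c₁ ∉ Degen V := by have := hnd 0 (by norm_num); rwa [hct0] at this
  have hc₂nd : c₂ ∉ Degen V := by have := hnd 1 (by norm_num); rwa [hct1] at this
  exact ⟨w, hwHull, opt_eq_singleton hc₁nd hwOpt, opt_eq_singleton hc₂nd hT1⟩

/-- If `‖c₁ − c₂‖ < max{ν_S(c₁), ν_S(c₂)}` then the optimal solution sets coincide and are
a common singleton `{w}` with `w ∈ S`; in particular any linear optimization oracle satisfies
`w*(c₁) = w*(c₂)`. -/
theorem stmt_0 (V : Set W) (hVfin : V.Finite) (hVne : V.Nonempty)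
    (wstar : (W →L[ℝ] ℝ) → W) (hwstar : ∀ c, wstar c ∈ Opt V c)
    (c₁ c₂ : W →L[ℝ] ℝ) (h : ‖c₁ - c₂‖ < max (nuS V c₁) (nuS V c₂)) :
    (∃ w ∈ convexHull ℝ V, Opt V c₁ = {w} ∧ Opt V c₂ = {w}) ∧ wstar c₁ = wstar c₂ := by
  have hmain : ∃ w ∈ convexHull ℝ V, Opt V c₁ = {w} ∧ Opt V c₂ = {w} := by
    rcases lt_max_iff.1 h with h1 | h2
    · exact key V hVfin hVne c₁ c₂ h1
    · obtain ⟨w, hw, h2', h1'⟩ := key V hVfin hVne c₂ c₁ (by rwa [norm_sub_rev])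
      exact ⟨w, hw, h1', h2'⟩
  obtain ⟨w, hw, he1, he2⟩ := hmain
  refine ⟨⟨w, hw, he1, he2⟩, ?_⟩
  have h1 := hwstar c₁; have h2 := hwstar c₂
  rw [he1] at h1; rw [he2] at h2
  simp only [Set.mem_singleton_iff] at h1 h2
  rw [h1, h2]
end

section
/- Let D be a probability measure on X × W*, where X is a measurable space. Suppose there exist a measurable function h̄ : X → W* and a constant ϱ ∈ [0,1) such that ‖h̄(x) − c‖ ≤ ϱ·ν_S(h̄(x)) for D-almost every (x, c). Then ℓ_SPO+(h̄(x), c) = 0 and ℓ_SPO(h̄(x), c) = 0 for D-almost every (x, c); consequently the SPO+ risk R_SPO+(h̄) := ∫ ℓ_SPO+(h̄(x), c) dD and the SPO risk R_SPO(h̄) := ∫ ℓ_SPO(h̄(x), c) dD are both zero, and since ℓ_SPO+ and ℓ_SPO are pointwise nonnegative, h̄ minimizes both the SPO+ risk and the SPO risk over all measurable predictors h : X → W*, so the minimum SPO+ risk and the minimum SPO risk both equal 0. -/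
open MeasureTheory

variable {W : Type*} [NormedAddCommGroup W] [NormedSpace ℝ W] [FiniteDimensional ℝ W]

/-- The SPO loss `ℓ_SPO(ĉ, c) = c(w*(ĉ)) − c(w*(c))`. -/
noncomputable def SPOLoss (wstar : (W →L[ℝ] ℝ) → W) (chat c : W →L[ℝ] ℝ) : ℝ :=
  c (wstar chat) - c (wstar c)

/-- The SPO+ loss `ℓ_SPO+(ĉ, c) = sup_{w ∈ S} (c − 2ĉ)(w) + 2ĉ(w*(c)) − c(w*(c))`. -/
noncomputable def SPOPlusLoss (V : Set W) (wstar : (W →L[ℝ] ℝ) → W)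
    (chat c : W →L[ℝ] ℝ) : ℝ :=
  sSup ((fun w => (c - (2 : ℝ) • chat) w) '' convexHull ℝ V)
    + 2 * chat (wstar c) - c (wstar c)

-- membership in Opt follows from inequalities on V
lemma opt_of_forall_V {V : Set W} {c : W →L[ℝ] ℝ} {w : W}
    (hw : w ∈ convexHull ℝ V) (h : ∀ v ∈ V, c w ≤ c v) : w ∈ Opt V c := by
  refine ⟨hw, ?_⟩
  intro w' hw'
  have hconv : Convex ℝ {u | c w ≤ c u} := convex_halfSpace_ge c.toLinearMap.isLinear (c w)
  exact convexHull_min h hconv hw'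

lemma nondegen_of_lt {V : Set W} {chat c : W →L[ℝ] ℝ}
    (h : ‖c - chat‖ < nuS V chat) : c ∉ Degen V := by
  intro hc
  have h2 : nuS V chat ≤ dist chat c := Metric.infDist_le_dist_of_mem hc
  rw [dist_eq_norm, ← norm_sub_rev] at h2
  exact absurd (lt_of_le_of_lt h2 h) (lt_irrefl _)

lemma opt_stable {V : Set W} (hVfin : V.Finite) {wstar : (W →L[ℝ] ℝ) → W}
    (hwstar : ∀ c, wstar c ∈ Opt V c) {chat c' : W →L[ℝ] ℝ}
    (hlt : ‖c' - chat‖ < nuS V chat) : wstar chat ∈ Opt V c' := by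
  set wb := wstar chat with hwb
  set ct : ℝ → (W →L[ℝ] ℝ) := fun t => chat + t • (c' - chat) with hct
  have hctnorm : ∀ t : ℝ, t ∈ Set.Icc (0:ℝ) 1 → ‖ct t - chat‖ < nuS V chat := by
    intro t ht
    have he : ct t - chat = t • (c' - chat) := by simp [hct]
    rw [he, norm_smul t (c' - chat)]
    calc ‖t‖ * ‖c' - chat‖ ≤ 1 * ‖c' - chat‖ := by
          apply mul_le_mul_of_nonneg_right _ (norm_nonneg _)
          rw [Real.norm_eq_abs, abs_le]; exact ⟨by linarith [ht.1], ht.2⟩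
      _ < nuS V chat := by rw [one_mul]; exact hlt
  have hnd : ∀ t : ℝ, t ∈ Set.Icc (0:ℝ) 1 → ct t ∉ Degen V := fun t ht =>
    nondegen_of_lt (hctnorm t ht)
  haveI : ConnectedSpace (Set.Icc (0:ℝ) 1) :=
    Subtype.connectedSpace ⟨Set.nonempty_Icc.mpr zero_le_one, isPreconnected_Icc⟩
  set T : Set (Set.Icc (0:ℝ) 1) := ⋂ v ∈ V, {t | ct ↑t wb ≤ ct ↑t v} with hT
  have hmemT : ∀ t : Set.Icc (0:ℝ) 1, t ∈ T ↔ ∀ v ∈ V, ct ↑t wb ≤ ct ↑t v := by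
    intro t; simp [hT]
  have hcont : ∀ w : W, Continuous fun t : Set.Icc (0:ℝ) 1 => ct ↑t w := by
    intro w
    have he : (fun t : Set.Icc (0:ℝ) 1 => ct ↑t w)
        = fun t : Set.Icc (0:ℝ) 1 => chat w + ↑t * (c' - chat) w := by
      funext t; simp [hct]
    rw [he]
    exact continuous_const.add (continuous_subtype_val.mul continuous_const)
  have hoptT : ∀ t : Set.Icc (0:ℝ) 1, t ∈ T → wb ∈ Opt V (ct ↑t) := by
    intro t ht
    exact opt_of_forall_V (hwstar chat).1 ((hmemT t).1 ht)
  have hclosed : IsClosed T :=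
    isClosed_biInter fun v _ => isClosed_le (hcont wb) (hcont v)
  have hopen : IsOpen T := by
    rw [isOpen_iff_mem_nhds]
    intro t ht
    have hOpen : IsOpen (⋂ v ∈ (V \ {wb} : Set W), {s : Set.Icc (0:ℝ) 1 | ct ↑s wb < ct ↑s v}) :=
      (hVfin.subset Set.diff_subset).isOpen_biInter fun v _ =>
        isOpen_lt (hcont wb) (hcont v)
    apply Filter.mem_of_superset (hOpen.mem_nhds ?_)
    · intro s hs
      rw [hmemT]
      intro v hv
      by_cases hveq : v = wb
      · rw [hveq]
      · exact le_of_lt (Set.mem_iInter₂.1 hs v ⟨hv, hveq⟩)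
    · rw [Set.mem_iInter₂]
      intro v hv
      by_contra hle
      simp only [Set.mem_setOf_eq, not_lt] at hle
      have hvopt : v ∈ Opt V (ct ↑t) :=
        ⟨subset_convexHull ℝ V hv.1, fun w hw => le_trans hle ((hoptT t ht).2 w hw)⟩
      exact hnd ↑t t.2 ⟨v, hvopt, wb, hoptT t ht, hv.2⟩
  have h0 : (⟨0, Set.mem_Icc.mpr ⟨le_refl 0, zero_le_one⟩⟩ : Set.Icc (0:ℝ) 1) ∈ T := by
    rw [hmemT]
    intro v hv
    have he : ct (0:ℝ) = chat := by simp [hct]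
    rw [he]
    exact (hwstar chat).2 v (subset_convexHull ℝ V hv)
  have hTuniv : T = Set.univ := IsClopen.eq_univ ⟨hclosed, hopen⟩ ⟨_, h0⟩
  have h1 : (⟨1, Set.mem_Icc.mpr ⟨zero_le_one, le_refl 1⟩⟩ : Set.Icc (0:ℝ) 1) ∈ T := by
    rw [hTuniv]; trivial
  have hfin : ∀ v ∈ V, c' wb ≤ c' v := by
    have h2 := (hmemT _).1 h1
    have he : ct (1:ℝ) = c' := by simp [hct]
    simpa [he] using h2
  exact opt_of_forall_V (hwstar chat).1 hfin

lemma bddAbove_img {V : Set W} (hVfin : V.Finite) (hVne : V.Nonempty) (d : W →L[ℝ] ℝ) :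
    BddAbove ((fun w => d w) '' convexHull ℝ V) := by
  obtain ⟨v, hv, hmax⟩ := Set.exists_max_image V d hVfin hVne
  refine ⟨d v, ?_⟩
  rintro x ⟨w, hw, rfl⟩
  have hconv : Convex ℝ {u | d u ≤ d v} := convex_halfSpace_le d.toLinearMap.isLinear (d v)
  exact convexHull_min hmax hconv hw

lemma spoLoss_nonneg {V : Set W} {wstar : (W →L[ℝ] ℝ) → W}
    (hwstar : ∀ c, wstar c ∈ Opt V c) (chat c : W →L[ℝ] ℝ) : 0 ≤ SPOLoss wstar chat c :=
  sub_nonneg.mpr ((hwstar c).2 _ (hwstar chat).1)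

lemma spoPlusLoss_nonneg {V : Set W} (hVfin : V.Finite) (hVne : V.Nonempty)
    {wstar : (W →L[ℝ] ℝ) → W} (hwstar : ∀ c, wstar c ∈ Opt V c) (chat c : W →L[ℝ] ℝ) :
    0 ≤ SPOPlusLoss V wstar chat c := by
  have hle : (c - (2:ℝ) • chat) (wstar c)
      ≤ sSup ((fun w => (c - (2 : ℝ) • chat) w) '' convexHull ℝ V) :=
    le_csSup (bddAbove_img hVfin hVne _) (Set.mem_image_of_mem _ (hwstar c).1)
  unfold SPOPlusLoss
  simp only [ContinuousLinearMap.sub_apply, ContinuousLinearMap.smul_apply, smul_eq_mul]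
    at hle ⊢
  linarith

lemma sup_eq {V : Set W} (hVfin : V.Finite) (hVne : V.Nonempty) {chat c : W →L[ℝ] ℝ} {wb : W}
    (hwb : wb ∈ convexHull ℝ V)
    (hopt : ∀ w ∈ convexHull ℝ V, ((2:ℝ) • chat - c) wb ≤ ((2:ℝ) • chat - c) w) :
    sSup ((fun w => (c - (2:ℝ) • chat) w) '' convexHull ℝ V) = (c - (2:ℝ) • chat) wb := by
  apply le_antisymm
  · apply csSup_le (Set.Nonempty.image _ ⟨wb, hwb⟩)
    rintro x ⟨w, hw, rfl⟩
    have h2 := hopt w hw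
    simp only [ContinuousLinearMap.sub_apply, ContinuousLinearMap.smul_apply, smul_eq_mul]
      at h2 ⊢
    linarith
  · exact le_csSup (bddAbove_img hVfin hVne _) (Set.mem_image_of_mem _ hwb)

lemma key_zero {V : Set W} (hVfin : V.Finite) (hVne : V.Nonempty)
    {wstar : (W →L[ℝ] ℝ) → W} (hwstar : ∀ c, wstar c ∈ Opt V c)
    {chat c : W →L[ℝ] ℝ} {ϱ : ℝ} (hϱ0 : 0 ≤ ϱ) (hϱ1 : ϱ < 1)
    (hsep : ‖chat - c‖ ≤ ϱ * nuS V chat) :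
    SPOPlusLoss V wstar chat c = 0 ∧ SPOLoss wstar chat c = 0 := by
  have hν : 0 ≤ nuS V chat := Metric.infDist_nonneg
  rcases eq_or_lt_of_le hν with h0 | hpos
  · -- degenerate distance is zero: chat = c
    have hle : ‖chat - c‖ ≤ 0 := by rw [← h0, mul_zero] at hsep; exact hsep
    have hce : chat = c := sub_eq_zero.mp (norm_le_zero_iff.mp hle)
    subst hce
    constructor
    · have hopt : ∀ w ∈ convexHull ℝ V, ((2:ℝ) • chat - chat) (wstar chat)
          ≤ ((2:ℝ) • chat - chat) w := by
        intro w hw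
        have h2 := (hwstar chat).2 w hw
        simp only [ContinuousLinearMap.sub_apply, ContinuousLinearMap.smul_apply, smul_eq_mul]
        linarith
      have hsup := sup_eq hVfin hVne (hwstar chat).1 hopt
      unfold SPOPlusLoss
      rw [hsup]
      simp only [ContinuousLinearMap.sub_apply, ContinuousLinearMap.smul_apply, smul_eq_mul]
      ring
    · unfold SPOLoss; ring
  · -- positive distance to degeneracy
    have hlt : ‖chat - c‖ < nuS V chat := lt_of_le_of_lt hsep (by nlinarith)
    have hc' : ‖c - chat‖ < nuS V chat := by rw [norm_sub_rev]; exact hlt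
    have hoptc : wstar chat ∈ Opt V c := opt_stable hVfin hwstar hc'
    have hwceq : wstar c = wstar chat := by
      by_contra hne
      exact nondegen_of_lt hc' ⟨wstar c, hwstar c, wstar chat, hoptc, hne⟩
    have hdnorm : ‖((2:ℝ) • chat - c) - chat‖ < nuS V chat := by
      have he : (2:ℝ) • chat - c - chat = chat - c := by
        rw [two_smul]; abel
      rw [he]; exact hlt
    have hoptd := opt_stable hVfin hwstar hdnorm
    have hsup := sup_eq hVfin hVne (hwstar chat).1 hoptd.2
    constructor
    · unfold SPOPlusLoss
      rw [hsup, hwceq]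
      simp only [ContinuousLinearMap.sub_apply, ContinuousLinearMap.smul_apply, smul_eq_mul]
      ring
    · unfold SPOLoss
      rw [hwceq]
      ring

/-- Under the separability condition `‖h̄(x) − c‖ ≤ ϱ·ν_S(h̄(x))` (D-a.e., with `ϱ ∈ [0,1)`),
the SPO+ and SPO losses of `h̄` vanish D-almost everywhere, its SPO+ and SPO risks are zero,
and `h̄` minimizes both risks over all measurable predictors (so both minimum risks are 0). -/
theorem stmt_2 {X : Type*} [MeasurableSpace X] [MeasurableSpace (W →L[ℝ] ℝ)]
    [BorelSpace (W →L[ℝ] ℝ)]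
    (V : Set W) (hVfin : V.Finite) (hVne : V.Nonempty)
    (wstar : (W →L[ℝ] ℝ) → W) (hwstar : ∀ c, wstar c ∈ Opt V c)
    (D : Measure (X × (W →L[ℝ] ℝ))) [IsProbabilityMeasure D]
    (hbar : X → (W →L[ℝ] ℝ)) (hbar_meas : Measurable hbar)
    (ϱ : ℝ) (hϱ0 : 0 ≤ ϱ) (hϱ1 : ϱ < 1)
    (hsep : ∀ᵐ p ∂D, ‖hbar p.1 - p.2‖ ≤ ϱ * nuS V (hbar p.1)) :
    (∀ᵐ p ∂D, SPOPlusLoss V wstar (hbar p.1) p.2 = 0 ∧ SPOLoss wstar (hbar p.1) p.2 = 0) ∧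
    (∫ p, SPOPlusLoss V wstar (hbar p.1) p.2 ∂D) = 0 ∧
    (∫ p, SPOLoss wstar (hbar p.1) p.2 ∂D) = 0 ∧
    (∀ h : X → (W →L[ℝ] ℝ), Measurable h →
      (∫ p, SPOPlusLoss V wstar (hbar p.1) p.2 ∂D) ≤
          (∫ p, SPOPlusLoss V wstar (h p.1) p.2 ∂D) ∧
        (∫ p, SPOLoss wstar (hbar p.1) p.2 ∂D) ≤ (∫ p, SPOLoss wstar (h p.1) p.2 ∂D)) := by
  have hpt : ∀ᵐ p ∂D, SPOPlusLoss V wstar (hbar p.1) p.2 = 0 ∧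
      SPOLoss wstar (hbar p.1) p.2 = 0 :=
    hsep.mono fun p hp => key_zero hVfin hVne hwstar hϱ0 hϱ1 hp
  have hP : (fun p : X × (W →L[ℝ] ℝ) => SPOPlusLoss V wstar (hbar p.1) p.2) =ᵐ[D]
      fun _ => 0 := hpt.mono fun p hp => hp.1
  have hS : (fun p : X × (W →L[ℝ] ℝ) => SPOLoss wstar (hbar p.1) p.2) =ᵐ[D]
      fun _ => 0 := hpt.mono fun p hp => hp.2
  have hIP : (∫ p, SPOPlusLoss V wstar (hbar p.1) p.2 ∂D) = 0 := by
    rw [integral_congr_ae hP, integral_zero]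
  have hIS : (∫ p, SPOLoss wstar (hbar p.1) p.2 ∂D) = 0 := by
    rw [integral_congr_ae hS, integral_zero]
  refine ⟨hpt, hIP, hIS, fun h _ => ⟨?_, ?_⟩⟩
  · rw [hIP]; exact integral_nonneg fun p => spoPlusLoss_nonneg hVfin hVne hwstar _ _
  · rw [hIS]; exact integral_nonneg fun p => spoLoss_nonneg hwstar _ _
end

section
/- Let b > 0, ϱ ∈ [0,1), τ ∈ (0,1], and set a := τ(1−ϱ)·b / (τ(1−ϱ) + 2). Let ĉ, ĉ′, c₀, c₁, c ∈ W* be cost vectors satisfying: (i) ‖ĉ − c₀‖ < a; (ii) ‖ĉ′ − c₁‖ ≤ a; (iii) ν_S(ĉ′) ≥ b; (iv) ν_S(c₀) ≥ τ·ν_S(c₁); and (v) ‖c₀ − c‖ ≤ ϱ·ν_S(c₀). Then w*(2ĉ − c) = w*(c) and ℓ_SPO+(ĉ, c) = 0. (This is the deterministic core of the safety of the margin-based rejection rule for the SPO+ loss under the strong separability condition: ĉ is the current model's prediction at a feature, ĉ′ is the prediction used in the rejection test, and c₀, c₁ are the predictions of two optimal predictors at that feature.) -/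
open MeasureTheory

variable {W : Type*} [NormedAddCommGroup W] [NormedSpace ℝ W] [FiniteDimensional ℝ W]

lemma mem_Opt_of_min (V : Set W) (c : W →L[ℝ] ℝ) {v : W} (hv : v ∈ V)
    (hmin : ∀ u ∈ V, c v ≤ c u) : v ∈ Opt V c := by
  refine ⟨subset_convexHull ℝ V hv, ?_⟩
  intro w hw
  have hconv : Convex ℝ {w : W | c v ≤ c w} :=
    convex_halfSpace_ge ⟨c.map_add, c.map_smul⟩ (c v)
  exact convexHull_min hmin hconv hw

lemma Opt_eq_singleton {V : Set W} {c : W →L[ℝ] ℝ} {w : W}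
    (hw : w ∈ Opt V c) (hnd : c ∉ Degen V) : Opt V c = {w} := by
  ext u
  simp only [Set.mem_singleton_iff]
  constructor
  · intro hu
    by_contra hne
    exact hnd ⟨u, hu, w, hw, hne⟩
  · rintro rfl; exact hw

lemma opt_stable_s3 (V : Set W) (hVfin : V.Finite) (hVne : V.Nonempty)
    {c₀ c' : W →L[ℝ] ℝ} (h : ‖c' - c₀‖ < nuS V c₀) :
    ∃ w, Opt V c₀ = {w} ∧ Opt V c' = {w} := by
  have hν0 : 0 < nuS V c₀ := lt_of_le_of_lt (norm_nonneg _) h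
  have hc₀nd : c₀ ∉ Degen V := fun hd => by
    have := Metric.infDist_zero_of_mem hd
    rw [show Metric.infDist c₀ (Degen V) = nuS V c₀ from rfl] at this
    linarith
  obtain ⟨w₀, hw₀V, hw₀min⟩ := Set.exists_min_image V c₀ hVfin hVne
  set ct : ℝ → (W →L[ℝ] ℝ) := fun t => c₀ + t • (c' - c₀) with hct
  have hct0 : ct 0 = c₀ := by simp [hct]
  have hct1 : ct 1 = c' := by simp [hct]
  have hcont : ∀ v : W, Continuous fun t => (ct t) v := by
    intro v
    have : (fun t => (ct t) v) = fun t => c₀ v + t * ((c' - c₀) v) := by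
      funext t; simp [hct]
    rw [this]
    exact continuous_const.add (continuous_id.mul continuous_const)
  have hTvclosed : ∀ v : W, IsClosed {t : ℝ | ∀ u ∈ V, (ct t) v ≤ (ct t) u} := by
    intro v
    have : {t : ℝ | ∀ u ∈ V, (ct t) v ≤ (ct t) u}
        = ⋂ u ∈ V, {t : ℝ | (ct t) v ≤ (ct t) u} := by
      ext t; simp [Set.mem_iInter]
    rw [this]
    exact isClosed_biInter fun u _ => isClosed_le (hcont v) (hcont u)
  have hmin' : ∀ u ∈ V, c' w₀ ≤ c' u := by
    by_contra h1
    set T : Set ℝ := Set.Icc (0:ℝ) 1 ∩ {t : ℝ | ∀ u ∈ V, (ct t) w₀ ≤ (ct t) u} with hT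
    have hTclosed : IsClosed T := isClosed_Icc.inter (hTvclosed w₀)
    have h0T : (0:ℝ) ∈ T := ⟨⟨le_refl 0, zero_le_one⟩, by rw [Set.mem_setOf_eq, hct0]; exact hw₀min⟩
    have hTbdd : BddAbove T := ⟨1, fun t ht => ht.1.2⟩
    set ts : ℝ := sSup T with hts
    have htsT : ts ∈ T := hTclosed.csSup_mem ⟨0, h0T⟩ hTbdd
    have hts1 : ts ≠ 1 := by
      intro he
      apply h1
      have h2 : ∀ u ∈ V, (ct ts) w₀ ≤ (ct ts) u := htsT.2
      rw [he, hct1] at h2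
      exact h2
    have htslt : ts < 1 := lt_of_le_of_ne htsT.1.2 hts1
    set U : Set W := V \ {w₀} with hU
    set B : Set ℝ := ⋃ v ∈ U, {t : ℝ | ∀ u ∈ V, (ct t) v ≤ (ct t) u} with hB
    have hBclosed : IsClosed B := (hVfin.diff : (V \ {w₀}).Finite).isClosed_biUnion fun v _ => hTvclosed v
    have hsubset : Set.Ioc ts 1 ⊆ B := by
      intro t ht
      have htIcc : t ∈ Set.Icc (0:ℝ) 1 := ⟨le_trans htsT.1.1 ht.1.le, ht.2⟩
      have htnT : t ∉ T := fun hm => absurd (le_csSup hTbdd hm) (not_le.mpr ht.1)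
      have hnot : ¬ ∀ u ∈ V, (ct t) w₀ ≤ (ct t) u := fun hall => htnT ⟨htIcc, hall⟩
      push_neg at hnot
      obtain ⟨u, huV, hu⟩ := hnot
      obtain ⟨v, hvV, hvmin⟩ := Set.exists_min_image V (ct t) hVfin hVne
      have hvne : v ≠ w₀ := by
        intro he
        exact absurd (he ▸ hvmin u huV) (not_le.mpr hu)
      exact Set.mem_biUnion (⟨hvV, hvne⟩ : v ∈ U) hvmin
    have htsB : ts ∈ B := by
      have h1' : ts ∈ closure (Set.Ioc ts 1) := by
        rw [closure_Ioc (ne_of_lt htslt)]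
        exact ⟨le_refl ts, htslt.le⟩
      have := closure_mono hsubset h1'
      rwa [hBclosed.closure_eq] at this
    obtain ⟨v, hvU, hvmin⟩ := Set.mem_iUnion₂.mp htsB
    have hvOpt : v ∈ Opt V (ct ts) := mem_Opt_of_min V _ hvU.1 hvmin
    have hw₀Opt : w₀ ∈ Opt V (ct ts) := mem_Opt_of_min V _ hw₀V htsT.2
    have hdeg : ct ts ∈ Degen V := ⟨v, hvOpt, w₀, hw₀Opt, hvU.2⟩
    have hle : nuS V c₀ ≤ dist c₀ (ct ts) := Metric.infDist_le_dist_of_mem hdeg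
    have hdist : dist c₀ (ct ts) = ts * ‖c' - c₀‖ := by
      rw [dist_eq_norm]
      have : c₀ - ct ts = -(ts • (c' - c₀)) := by simp [hct]
      rw [this, norm_neg, norm_smul ts (c' - c₀), Real.norm_eq_abs, abs_of_nonneg htsT.1.1]
    rw [hdist] at hle
    have : ts * ‖c' - c₀‖ ≤ ‖c' - c₀‖ := mul_le_of_le_one_left (norm_nonneg _) htsT.1.2
    linarith
  have hw₀Opt' : w₀ ∈ Opt V c' := mem_Opt_of_min V c' hw₀V hmin'
  have hw₀Opt₀ : w₀ ∈ Opt V c₀ := mem_Opt_of_min V c₀ hw₀V hw₀min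
  have hc'nd : c' ∉ Degen V := by
    intro hd
    have h0 : Metric.infDist c' (Degen V) = 0 := Metric.infDist_zero_of_mem hd
    have hlip : Metric.infDist c₀ (Degen V) ≤ Metric.infDist c' (Degen V) + dist c₀ c' :=
      Metric.infDist_le_infDist_add_dist
    rw [h0, zero_add, dist_eq_norm, norm_sub_rev] at hlip
    have : nuS V c₀ ≤ ‖c' - c₀‖ := hlip
    linarith
  exact ⟨w₀, Opt_eq_singleton hw₀Opt₀ hc₀nd, Opt_eq_singleton hw₀Opt' hc'nd⟩

/-- Deterministic core of the safety of the margin-based rejection rule for the SPO+ loss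
under the strong separability condition. With `a = τ(1−ϱ)b/(τ(1−ϱ)+2)`: if
(i) `‖ĉ − c₀‖ < a`, (ii) `‖ĉ′ − c₁‖ ≤ a`, (iii) `ν_S(ĉ′) ≥ b`, (iv) `ν_S(c₀) ≥ τ·ν_S(c₁)`,
and (v) `‖c₀ − c‖ ≤ ϱ·ν_S(c₀)`, then `w*(2ĉ − c) = w*(c)` and `ℓ_SPO+(ĉ, c) = 0`. -/
theorem stmt_3 (V : Set W) (hVfin : V.Finite) (hVne : V.Nonempty)
    (wstar : (W →L[ℝ] ℝ) → W) (hwstar : ∀ c, wstar c ∈ Opt V c)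
    (b ϱ τ : ℝ) (hb : 0 < b) (hϱ0 : 0 ≤ ϱ) (hϱ1 : ϱ < 1) (hτ0 : 0 < τ) (hτ1 : τ ≤ 1)
    (chat chat' c₀ c₁ c : W →L[ℝ] ℝ)
    (hi : ‖chat - c₀‖ < τ * (1 - ϱ) * b / (τ * (1 - ϱ) + 2))
    (hii : ‖chat' - c₁‖ ≤ τ * (1 - ϱ) * b / (τ * (1 - ϱ) + 2))
    (hiii : b ≤ nuS V chat')
    (hiv : τ * nuS V c₁ ≤ nuS V c₀)
    (hv : ‖c₀ - c‖ ≤ ϱ * nuS V c₀) :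
    wstar ((2 : ℝ) • chat - c) = wstar c ∧ SPOPlusLoss V wstar chat c = 0 := by
  set s : ℝ := τ * (1 - ϱ) with hs
  set a : ℝ := s * b / (s + 2) with ha
  have hspos : 0 < s := mul_pos hτ0 (by linarith)
  have hapos : 0 < a := div_pos (mul_pos hspos hb) (by linarith)
  have hab : a < b := by
    rw [ha, div_lt_iff₀ (by linarith : (0:ℝ) < s + 2)]
    nlinarith
  -- ν(c₁) ≥ b - a
  have hlip1 : nuS V chat' ≤ nuS V c₁ + ‖chat' - c₁‖ := by
    have := Metric.infDist_le_infDist_add_dist (x := chat') (y := c₁) (s := Degen V)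
    rwa [dist_eq_norm] at this
  have hn1 : b - a ≤ nuS V c₁ := by linarith
  have hn0 : τ * (b - a) ≤ nuS V c₀ :=
    le_trans (mul_le_mul_of_nonneg_left hn1 hτ0.le) hiv
  have hν0pos : 0 < nuS V c₀ :=
    lt_of_lt_of_le (mul_pos hτ0 (by linarith)) hn0
  -- key: 2 * a = s * (b - a)
  have hkey : 2 * a = s * (b - a) := by
    rw [ha]
    field_simp
    ring
  have h2a : 2 * a + ϱ * nuS V c₀ ≤ nuS V c₀ := by
    have : s * (b - a) ≤ (1 - ϱ) * nuS V c₀ := by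
      rw [hs, mul_comm τ (1 - ϱ), mul_assoc]
      exact mul_le_mul_of_nonneg_left hn0 (by linarith)
    nlinarith
  have h1 : ‖c - c₀‖ < nuS V c₀ := by
    rw [norm_sub_rev]
    calc ‖c₀ - c‖ ≤ ϱ * nuS V c₀ := hv
      _ < nuS V c₀ := by nlinarith
  have h2 : ‖((2 : ℝ) • chat - c) - c₀‖ < nuS V c₀ := by
    have he : ((2 : ℝ) • chat - c) - c₀ = (2 : ℝ) • (chat - c₀) + (c₀ - c) := by
      ext x
      simp only [ContinuousLinearMap.add_apply, ContinuousLinearMap.sub_apply,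
        ContinuousLinearMap.smul_apply, smul_eq_mul]
      ring
    calc ‖((2 : ℝ) • chat - c) - c₀‖ ≤ ‖(2 : ℝ) • (chat - c₀)‖ + ‖c₀ - c‖ := by
          rw [he]; exact norm_add_le _ _
      _ = 2 * ‖chat - c₀‖ + ‖c₀ - c‖ := by
          rw [norm_smul (2:ℝ) (chat - c₀), Real.norm_eq_abs]; norm_num
      _ < 2 * a + ϱ * nuS V c₀ := by
          have := hi; have := hv
          rw [← hs, ← ha] at *
          linarith
      _ ≤ nuS V c₀ := h2a
  obtain ⟨w, hO₀, hOc⟩ := opt_stable_s3 V hVfin hVne h1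
  obtain ⟨w', hO₀', hO2⟩ := opt_stable_s3 V hVfin hVne h2
  have hww' : w' = w := by
    have := hO₀'.symm.trans hO₀
    exact Set.singleton_eq_singleton_iff.mp this
  rw [hww'] at hO2
  have hwc : wstar c = w := by
    have := hwstar c; rw [hOc] at this; exact this
  have hw2 : wstar ((2 : ℝ) • chat - c) = w := by
    have := hwstar ((2 : ℝ) • chat - c); rw [hO2] at this; exact this
  refine ⟨hw2.trans hwc.symm, ?_⟩
  have hwOpt2 : w ∈ Opt V ((2 : ℝ) • chat - c) := by rw [hO2]; rfl
  have hwconv : w ∈ convexHull ℝ V := hwOpt2.1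
  have hsup : sSup ((fun w => (c - (2 : ℝ) • chat) w) '' convexHull ℝ V)
      = (c - (2 : ℝ) • chat) w := by
    apply IsGreatest.csSup_eq
    constructor
    · exact ⟨w, hwconv, rfl⟩
    · rintro y ⟨x, hx, rfl⟩
      have := hwOpt2.2 x hx
      simp only [ContinuousLinearMap.sub_apply, ContinuousLinearMap.smul_apply,
        smul_eq_mul] at this ⊢
      linarith
  unfold SPOPlusLoss
  rw [hsup, hwc]
  simp only [ContinuousLinearMap.sub_apply, ContinuousLinearMap.smul_apply, smul_eq_mul]
  ring
end

section
/- Let D be a probability measure on X × W*, where X is a measurable space, and assume the oracle w* is measurable. Let h, h* : X → W* be measurable functions, let b > 0, and let ω̄ ≥ 0 be such that the linear optimization gap ω_S(c) := sup_{w∈S} c(w) − inf_{w∈S} c(w) satisfies ω_S(c) ≤ ω̄ for D-almost every (x, c). If ‖h(x) − h*(x)‖ ≤ b for almost every x with respect to the X-marginal μ of D, then ∫ ℓ_SPO(h(x), c) dD ≤ ∫ ℓ_SPO(h*(x), c) dD + ω̄ · μ{x : ν_S(h*(x)) < 2b}. In words, the excess SPO risk of h over h* is at most the near-degeneracy probability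 μ{x : ν_S(h*(x)) < 2b} times the linear optimization gap bound ω̄. -/
open MeasureTheory

variable {W : Type*} [NormedAddCommGroup W] [NormedSpace ℝ W] [FiniteDimensional ℝ W]

/-- The linear optimization gap `ω_S(c) = sup_{w∈S} c(w) − inf_{w∈S} c(w)`. -/
noncomputable def omegaS (V : Set W) (c : W →L[ℝ] ℝ) : ℝ :=
  sSup ((fun w => c w) '' convexHull ℝ V) - sInf ((fun w => c w) '' convexHull ℝ V)

/-- A vertex minimizing `c` over `V` is optimal over the convex hull. -/
lemma min_mem_Opt {V : Set W} {c : W →L[ℝ] ℝ} {v : W} (hv : v ∈ V)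
    (hmin : ∀ v' ∈ V, c v ≤ c v') : v ∈ Opt V c := by
  refine ⟨subset_convexHull ℝ V hv, fun w' hw' => ?_⟩
  have hsub : convexHull ℝ V ⊆ {w | c v ≤ c w} :=
    convexHull_min (fun v' hv' => hmin v' hv')
      (convex_halfSpace_ge ⟨c.map_add, fun r x => c.map_smul r x⟩ (c v))
  exact hsub hw'

/-- Key deterministic lemma: if `ĉ` is within `b` of `c` and `c` is at distance at least `2b`
from degeneracy, then the oracle outputs agree. -/
lemma wstar_eq_of_far (V : Set W) (hVfin : V.Finite) (hVne : V.Nonempty)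
    (wstar : (W →L[ℝ] ℝ) → W) (hwstar : ∀ c, wstar c ∈ Opt V c)
    {b : ℝ} (hb : 0 < b) {c chat : W →L[ℝ] ℝ}
    (hdist : ‖chat - c‖ ≤ b) (hν : 2 * b ≤ nuS V c) :
    wstar chat = wstar c := by
  by_contra hne
  -- any degenerate cost vector is far from c
  have hfar : ∀ d ∈ Degen V, ¬ dist c d ≤ b := by
    intro d hd hle
    have h1 : nuS V c ≤ dist c d := Metric.infDist_le_dist_of_mem hd
    linarith
  have huniq : ∀ {d : W →L[ℝ] ℝ}, d ∉ Degen V →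
      ∀ w₁ ∈ Opt V d, ∀ w₂ ∈ Opt V d, w₁ = w₂ := by
    intro d hd w₁ h₁ w₂ h₂
    by_contra hne'
    exact hd ⟨w₁, h₁, w₂, h₂, hne'⟩
  have hcD : c ∉ Degen V := fun hmem => hfar c hmem (by simp [dist_self]; linarith)
  have hchatD : chat ∉ Degen V := fun hmem => by
    refine hfar chat hmem ?_
    rw [dist_eq_norm, ← norm_neg, neg_sub]
    exact hdist
  -- the oracle outputs are vertices
  obtain ⟨v0, hv0V, hv0min⟩ := Set.exists_min_image V (fun w => c w) hVfin hVne
  obtain ⟨v1, hv1V, hv1min⟩ := Set.exists_min_image V (fun w => chat w) hVfin hVne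
  have hw0 : wstar c = v0 := huniq hcD _ (hwstar c) _ (min_mem_Opt hv0V hv0min)
  have hw1 : wstar chat = v1 := huniq hchatD _ (hwstar chat) _ (min_mem_Opt hv1V hv1min)
  set w0 := wstar c with hw0def
  set w1 := wstar chat with hw1def
  have hw0V : w0 ∈ V := hw0 ▸ hv0V
  have hw1V : w1 ∈ V := hw1 ▸ hv1V
  -- the segment of cost vectors
  set L : ℝ → (W →L[ℝ] ℝ) := fun t => c + t • (chat - c) with hL
  have hLcont : ∀ w : W, Continuous (fun t => L t w) := by
    intro w
    simp only [hL, ContinuousLinearMap.add_apply, ContinuousLinearMap.smul_apply, smul_eq_mul]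
    fun_prop
  have hTclosed : ∀ v : W, IsClosed ({t : ℝ | ∀ v' ∈ V, L t v ≤ L t v'} ∩ Set.Icc 0 1) := by
    intro v
    refine IsClosed.inter ?_ isClosed_Icc
    have : {t : ℝ | ∀ v' ∈ V, L t v ≤ L t v'} = ⋂ v' ∈ V, {t | L t v ≤ L t v'} := by
      ext t; simp
    rw [this]
    exact isClosed_biInter fun v' _ => isClosed_le (hLcont v) (hLcont v')
  -- produce a degenerate point on the segment, for a contradiction
  have hdeg : ∃ t ∈ Set.Icc (0:ℝ) 1, L t ∈ Degen V := by
    set S0 : Set ℝ := {t : ℝ | ∀ v' ∈ V, L t w0 ≤ L t v'} ∩ Set.Icc 0 1 with hS0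
    have hL0 : L 0 = c := by simp [hL]
    have hL1 : L 1 = chat := by simp [hL]
    have h0S0 : (0:ℝ) ∈ S0 := by
      refine ⟨fun v' hv' => ?_, by norm_num⟩
      rw [hL0]
      exact (hwstar c).2 v' (subset_convexHull ℝ V hv')
    have hS0comp : IsCompact S0 :=
      isCompact_Icc.of_isClosed_subset (hTclosed w0) Set.inter_subset_right
    have hS0ne : S0.Nonempty := ⟨0, h0S0⟩
    set tstar := sSup S0 with htstar
    have htS0 : tstar ∈ S0 := hS0comp.sSup_mem hS0ne
    have htIcc : tstar ∈ Set.Icc (0:ℝ) 1 := htS0.2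
    by_cases h1 : tstar = 1
    · -- both w0 and w1 minimize chat over V: chat degenerate, contradiction
      exfalso
      apply hchatD
      have hmin0 : ∀ v' ∈ V, chat w0 ≤ chat v' := by
        intro v' hv'
        have := htS0.1 v' hv'
        rwa [h1, hL1] at this
      exact ⟨w0, min_mem_Opt hw0V hmin0, w1, hwstar chat, fun hh => hne hh.symm⟩
    · have htlt : tstar < 1 := lt_of_le_of_ne htIcc.2 h1
      set U : Set ℝ := ⋃ v ∈ V \ {w0}, ({t : ℝ | ∀ v' ∈ V, L t v ≤ L t v'} ∩ Set.Icc 0 1)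
        with hU
      have hUclosed : IsClosed U :=
        (hVfin.diff (t := {w0})).isClosed_biUnion fun v _ => hTclosed v
      have hsub : Set.Ioc tstar 1 ⊆ U := by
        intro t ht
        have htIcc' : t ∈ Set.Icc (0:ℝ) 1 := ⟨le_trans htIcc.1 ht.1.le, ht.2⟩
        obtain ⟨v, hvV, hvmin⟩ := Set.exists_min_image V (fun w => L t w) hVfin hVne
        have hvne : v ≠ w0 := by
          intro hveq
          subst hveq
          have : t ∈ S0 := ⟨hvmin, htIcc'⟩
          have : t ≤ tstar := le_csSup hS0comp.bddAbove this
          linarith [ht.1]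
        exact Set.mem_biUnion ⟨hvV, hvne⟩ ⟨hvmin, htIcc'⟩
      have htU : tstar ∈ U := by
        have h1' : tstar ∈ closure (Set.Ioc tstar 1) := by
          rw [closure_Ioc (ne_of_lt htlt)]
          exact ⟨le_refl _, htlt.le⟩
        exact hUclosed.closure_subset ((closure_mono hsub) h1')
      obtain ⟨v, hvmem, hvmin, _⟩ := by
        simpa only [hU, Set.mem_iUnion, Set.mem_inter_iff, exists_prop] using htU
      refine ⟨tstar, htIcc, v, min_mem_Opt hvmem.1 hvmin, w0,
        min_mem_Opt hw0V htS0.1, hvmem.2⟩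
  obtain ⟨t, ht, hdegt⟩ := hdeg
  refine hfar (L t) hdegt ?_
  have hseg : c - L t = (-t) • (chat - c) := by
    simp only [hL]
    module
  have hnorm : ‖(-t) • (chat - c)‖ = ‖-t‖ * ‖chat - c‖ := norm_smul (-t) (chat - c)
  have : dist c (L t) = t * ‖chat - c‖ := by
    rw [dist_eq_norm, hseg, hnorm, Real.norm_eq_abs, abs_neg, abs_of_nonneg ht.1]
  rw [this]
  nlinarith [ht.1, ht.2, norm_nonneg (chat - c)]

lemma SPOLoss_nonneg (V : Set W) (wstar : (W →L[ℝ] ℝ) → W)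
    (hwstar : ∀ c, wstar c ∈ Opt V c) (chat c : W →L[ℝ] ℝ) :
    0 ≤ SPOLoss wstar chat c := by
  have := (hwstar c).2 (wstar chat) (hwstar chat).1
  simp only [SPOLoss]; linarith

lemma SPOLoss_le_omegaS (V : Set W) (hVfin : V.Finite) (hVne : V.Nonempty)
    (wstar : (W →L[ℝ] ℝ) → W) (hwstar : ∀ c, wstar c ∈ Opt V c) (chat c : W →L[ℝ] ℝ) :
    SPOLoss wstar chat c ≤ omegaS V c := by
  have hcomp : IsCompact ((fun w => c w) '' convexHull ℝ V) :=
    (hVfin.isCompact_convexHull ℝ).image c.continuous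
  have hbdda : BddAbove ((fun w => c w) '' convexHull ℝ V) := hcomp.bddAbove
  have hbddb : BddBelow ((fun w => c w) '' convexHull ℝ V) := hcomp.bddBelow
  have h1 : c (wstar chat) ≤ sSup ((fun w => c w) '' convexHull ℝ V) :=
    le_csSup hbdda (Set.mem_image_of_mem _ (hwstar chat).1)
  have h2 : sInf ((fun w => c w) '' convexHull ℝ V) ≤ c (wstar c) :=
    csInf_le hbddb (Set.mem_image_of_mem _ (hwstar c).1)
  simp only [SPOLoss, omegaS]; linarith

/-- If `‖h(x) − h*(x)‖ ≤ b` for μ-almost every `x` (μ the X-marginal of D) and the linear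
optimization gap is bounded by `ω̄` D-a.e., then the excess SPO risk of `h` over `h*` is at
most `ω̄ · μ{x : ν_S(h*(x)) < 2b}`. -/
theorem stmt_4 {X : Type*} [MeasurableSpace X]
    [MeasurableSpace W] [BorelSpace W]
    [MeasurableSpace (W →L[ℝ] ℝ)] [BorelSpace (W →L[ℝ] ℝ)]
    (V : Set W) (hVfin : V.Finite) (hVne : V.Nonempty)
    (wstar : (W →L[ℝ] ℝ) → W) (hwstar : ∀ c, wstar c ∈ Opt V c)
    (hwstar_meas : Measurable wstar)
    (D : Measure (X × (W →L[ℝ] ℝ))) [IsProbabilityMeasure D]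
    (h hstar : X → (W →L[ℝ] ℝ)) (hh : Measurable h) (hhstar : Measurable hstar)
    (b : ℝ) (hb : 0 < b) (ωbar : ℝ) (hωbar : 0 ≤ ωbar)
    (hgap : ∀ᵐ p ∂D, omegaS V p.2 ≤ ωbar)
    (hclose : ∀ᵐ x ∂(D.map Prod.fst), ‖h x - hstar x‖ ≤ b) :
    (∫ p, SPOLoss wstar (h p.1) p.2 ∂D) ≤
      (∫ p, SPOLoss wstar (hstar p.1) p.2 ∂D) +
        ωbar * ((D.map Prod.fst) {x | nuS V (hstar x) < 2 * b}).toReal := by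
  set A : Set X := {x | nuS V (hstar x) < 2 * b} with hA
  have hnuScont : Continuous (fun c : W →L[ℝ] ℝ => nuS V c) := by
    simp only [nuS]
    exact Metric.continuous_infDist_pt (Degen V)
  have hAmeas : MeasurableSet A :=
    measurableSet_lt (hnuScont.measurable.comp hhstar) measurable_const
  -- measurability of the losses
  have heval : Measurable (fun q : (W →L[ℝ] ℝ) × W => q.1 q.2) :=
    isBoundedBilinearMap_apply.continuous.measurable
  have m2 : Measurable (fun p : X × (W →L[ℝ] ℝ) => p.2 (wstar p.2)) :=
    heval.comp (measurable_snd.prodMk (hwstar_meas.comp measurable_snd))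
  have mf : Measurable (fun p : X × (W →L[ℝ] ℝ) => SPOLoss wstar (h p.1) p.2) := by
    simp only [SPOLoss]
    exact (heval.comp (measurable_snd.prodMk
      (hwstar_meas.comp (hh.comp measurable_fst)))).sub m2
  have mg : Measurable (fun p : X × (W →L[ℝ] ℝ) => SPOLoss wstar (hstar p.1) p.2) := by
    simp only [SPOLoss]
    exact (heval.comp (measurable_snd.prodMk
      (hwstar_meas.comp (hhstar.comp measurable_fst)))).sub m2
  -- integrability
  have hint : ∀ (k : X → (W →L[ℝ] ℝ)),
      Measurable (fun p : X × (W →L[ℝ] ℝ) => SPOLoss wstar (k p.1) p.2) →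
      Integrable (fun p : X × (W →L[ℝ] ℝ) => SPOLoss wstar (k p.1) p.2) D := by
    intro k mk
    refine Integrable.mono' (integrable_const ωbar) mk.aestronglyMeasurable ?_
    filter_upwards [hgap] with p hp
    rw [Real.norm_eq_abs, abs_le]
    constructor
    · linarith [SPOLoss_nonneg V wstar hwstar (k p.1) p.2]
    · linarith [SPOLoss_le_omegaS V hVfin hVne wstar hwstar (k p.1) p.2]
  have hf_int := hint h mf
  have hg_int := hint hstar mg
  have hind_int : Integrable ((Prod.fst ⁻¹' A).indicator
      (fun _ : X × (W →L[ℝ] ℝ) => ωbar)) D :=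
    (integrable_const ωbar).indicator (hAmeas.preimage measurable_fst)
  -- pull back hclose
  have hclose_set : MeasurableSet {x : X | ‖h x - hstar x‖ ≤ b} :=
    measurableSet_le ((hh.sub hhstar).norm) measurable_const
  have hclose' : ∀ᵐ p ∂D, ‖h p.1 - hstar p.1‖ ≤ b :=
    (ae_map_iff measurable_fst.aemeasurable hclose_set).mp hclose
  -- pointwise comparison
  have hpt : ∀ᵐ p ∂D, SPOLoss wstar (h p.1) p.2 ≤
      SPOLoss wstar (hstar p.1) p.2 +
        (Prod.fst ⁻¹' A).indicator (fun _ => ωbar) p := by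
    filter_upwards [hgap, hclose'] with p h1 h2
    by_cases hcase : nuS V (hstar p.1) < 2 * b
    · have hmem : p ∈ Prod.fst ⁻¹' A := hcase
      rw [Set.indicator_of_mem hmem]
      have := SPOLoss_nonneg V wstar hwstar (hstar p.1) p.2
      have := SPOLoss_le_omegaS V hVfin hVne wstar hwstar (h p.1) p.2
      linarith
    · push_neg at hcase
      have heq : wstar (h p.1) = wstar (hstar p.1) :=
        wstar_eq_of_far V hVfin hVne wstar hwstar hb h2 hcase
      have : SPOLoss wstar (h p.1) p.2 = SPOLoss wstar (hstar p.1) p.2 := by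
        simp only [SPOLoss, heq]
      rw [this]
      have hind : (0:ℝ) ≤ (Prod.fst ⁻¹' A).indicator (fun _ => ωbar) p :=
        Set.indicator_nonneg (fun _ _ => hωbar) p
      linarith
  calc (∫ p, SPOLoss wstar (h p.1) p.2 ∂D)
      ≤ ∫ p, (SPOLoss wstar (hstar p.1) p.2 +
          (Prod.fst ⁻¹' A).indicator (fun _ => ωbar) p) ∂D :=
        integral_mono_ae hf_int (hg_int.add hind_int) hpt
    _ = (∫ p, SPOLoss wstar (hstar p.1) p.2 ∂D) +
          ∫ p, (Prod.fst ⁻¹' A).indicator (fun _ => ωbar) p ∂D :=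
        integral_add hg_int hind_int
    _ = (∫ p, SPOLoss wstar (hstar p.1) p.2 ∂D) +
          ωbar * ((D.map Prod.fst) A).toReal := by
        rw [integral_indicator_const ωbar (hAmeas.preimage measurable_fst),
          Measure.map_apply measurable_fst hAmeas]
        rw [smul_eq_mul, mul_comm]
        rfl
end

section
/- Let μ be a probability measure on a measurable space X, let H*_ℓ and H* be nonempty sets of functions X → W* with H*_ℓ ⊆ H*, let h : X → W* be a function, and let b ≥ 0. Suppose Dist_{H*_ℓ}(h) := inf_{h′∈H*_ℓ} esssup_{x∼μ} ‖h(x) − h′(x)‖ ≤ b. Then: (i) for μ-almost every x, ν_S(h(x)) ≥ inf_{h*∈H*} ν_S(h*(x)) − b; and consequently (ii) μ{x : ν_S(h(x)) < b} ≤ Ψ(2b), where the near-degeneracy function is Ψ(b) := μ{x : inf_{h*∈H*} ν_S(h*(x)) ≤ b}. -/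
open MeasureTheory
open scoped ENNReal NNReal

variable {W : Type*} [NormedAddCommGroup W] [NormedSpace ℝ W] [FiniteDimensional ℝ W]

/-- If the sup-norm distance `Dist_{H*_ℓ}(h) = inf_{h′∈H*_ℓ} esssup_x ‖h(x) − h′(x)‖` is at
most `b` and `H*_ℓ ⊆ H*`, then (i) for μ-a.e. `x`, `ν_S(h(x)) ≥ inf_{h*∈H*} ν_S(h*(x)) − b`;
and (ii) `μ{x : ν_S(h(x)) < b} ≤ Ψ(2b)`, where
`Ψ(b) = μ{x : inf_{h*∈H*} ν_S(h*(x)) ≤ b}` is the near-degeneracy function. -/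
theorem stmt_5 {X : Type*} [MeasurableSpace X]
    (V : Set W) (hVfin : V.Finite) (hVne : V.Nonempty)
    (μ : Measure X) [IsProbabilityMeasure μ]
    (Hl Hstar : Set (X → (W →L[ℝ] ℝ)))
    (hHl : Hl.Nonempty) (hHstar : Hstar.Nonempty) (hsub : Hl ⊆ Hstar)
    (h : X → (W →L[ℝ] ℝ)) (b : ℝ) (hb : 0 ≤ b)
    (hdist : ⨅ h' ∈ Hl, essSup (fun x => (‖h x - h' x‖₊ : ℝ≥0∞)) μ ≤ ENNReal.ofReal b) :
    (∀ᵐ x ∂μ, sInf ((fun h' => nuS V (h' x)) '' Hstar) - b ≤ nuS V (h x)) ∧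
      μ {x | nuS V (h x) < b} ≤
        μ {x | sInf ((fun h' => nuS V (h' x)) '' Hstar) ≤ 2 * b} := by
  have hbdd : ∀ x : X, BddBelow ((fun h' => nuS V (h' x)) '' Hstar) := fun x =>
    ⟨0, by rintro r ⟨g, hg, rfl⟩; exact Metric.infDist_nonneg⟩
  have key : ∀ ε : ℝ, 0 < ε → ∀ᵐ x ∂μ,
      sInf ((fun h' => nuS V (h' x)) '' Hstar) - b ≤ nuS V (h x) + ε := by
    intro ε hε
    have hlt : (⨅ h' ∈ Hl, essSup (fun x => (‖h x - h' x‖₊ : ℝ≥0∞)) μ)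
        < ENNReal.ofReal (b + ε) := by
      refine lt_of_le_of_lt hdist ?_
      rw [ENNReal.ofReal_lt_ofReal_iff (by linarith)]
      linarith
    obtain ⟨h', hlt⟩ := iInf_lt_iff.mp hlt
    obtain ⟨hh', hlt'⟩ := iInf_lt_iff.mp hlt
    have hae := ae_lt_of_essSup_lt hlt'
    filter_upwards [hae] with x hx
    have hxnorm : ‖h x - h' x‖ < b + ε := by
      have hfin : ((‖h x - h' x‖₊ : ℝ≥0∞)).toReal < (ENNReal.ofReal (b + ε)).toReal :=
        (ENNReal.toReal_lt_toReal ENNReal.coe_ne_top ENNReal.ofReal_ne_top).mpr hx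
      simpa [ENNReal.toReal_ofReal (by linarith : (0:ℝ) ≤ b + ε)] using hfin
    have h1 : nuS V (h' x) ≤ nuS V (h x) + dist (h' x) (h x) :=
      Metric.infDist_le_infDist_add_dist
    have h2 : sInf ((fun h' => nuS V (h' x)) '' Hstar) ≤ nuS V (h' x) :=
      csInf_le (hbdd x) ⟨h', hsub hh', rfl⟩
    have h3 : dist (h' x) (h x) = ‖h x - h' x‖ := by
      rw [dist_eq_norm, norm_sub_rev]
    linarith
  have main : ∀ᵐ x ∂μ, sInf ((fun h' => nuS V (h' x)) '' Hstar) - b ≤ nuS V (h x) := by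
    have hseq : ∀ᵐ x ∂μ, ∀ n : ℕ,
        sInf ((fun h' => nuS V (h' x)) '' Hstar) - b ≤ nuS V (h x) + 1 / (n + 1) :=
      ae_all_iff.mpr fun n => key (1 / (n + 1)) (by positivity)
    filter_upwards [hseq] with x hx
    refine le_of_forall_pos_le_add fun ε hε => ?_
    obtain ⟨n, hn⟩ := exists_nat_one_div_lt hε
    have := hx n
    push_cast at this
    linarith
  refine ⟨main, measure_mono_ae ?_⟩
  filter_upwards [main] with x hx hxb
  have hxb' : nuS V (h x) < b := hxb
  show sInf ((fun h' => nuS V (h' x)) '' Hstar) ≤ 2 * b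
  linarith
end

section
/- Let μ be a probability measure on a measurable space X, let H*_ℓ ⊆ H* be nonempty sets of functions X → W*, and let Ψ(b) := μ{x : inf_{h*∈H*} ν_S(h*(x)) ≤ b}. Let T ≥ 1, let p̃ ∈ [0,1], let b₀,…,b_{T−1} ≥ 0, and let h₀,…,h_{T−1} : X → W* be measurable functions satisfying Dist_{H*_ℓ}(h_t) := inf_{h′∈H*_ℓ} esssup_{x∼μ} ‖h_t(x) − h′(x)‖ ≤ b_t for each t. On a probability space, let x₁,…,x_T be independent X-valued random variables each with law μ, and let q₁,…,q_T be {0,1}-valued random variables with P(q_t = 1) = p̃ for each t. Suppose at iteration t ∈ {1,…,T} a label is acquired if ν_S(h_{t−1}(x_t)) < b_{t−1}, and otherwise a label is acquired exactly when q_t = 1. Then the expected total number of labels acquired over the T iterations is at most p̃·T + Σ_{t=1}^{T} Ψ(2·b_{t−1}). -/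
open MeasureTheory ProbabilityTheory
open scoped ENNReal NNReal

variable {W : Type*} [NormedAddCommGroup W] [NormedSpace ℝ W] [FiniteDimensional ℝ W]

/-- Label complexity bound for margin-based active learning with soft rejection: if at
iteration `t` a label is acquired when `ν_S(h_{t−1}(x_t)) < b_{t−1}` and otherwise exactly
when the coin `q_t = 1` (with `P(q_t = 1) = p̃`), and each predictor `h_{t−1}` is within
essential sup-norm distance `b_{t−1}` of `H*_ℓ ⊆ H*`, then the expected number of acquired
labels is at most `p̃·T + Σ_{t=1}^T Ψ(2b_{t−1})`. -/
theorem stmt_6 {X : Type*} [MeasurableSpace X] [MeasurableSpace (W →L[ℝ] ℝ)]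
    [BorelSpace (W →L[ℝ] ℝ)]
    (V : Set W) (hVfin : V.Finite) (hVne : V.Nonempty)
    (μ : Measure X) [IsProbabilityMeasure μ]
    (Hl Hstar : Set (X → (W →L[ℝ] ℝ)))
    (hHl : Hl.Nonempty) (hHstar : Hstar.Nonempty) (hsub : Hl ⊆ Hstar)
    (T : ℕ) (hT : 1 ≤ T)
    (ptil : ℝ) (hptil0 : 0 ≤ ptil) (hptil1 : ptil ≤ 1)
    (b : Fin T → ℝ) (hb : ∀ t, 0 ≤ b t)
    (h : Fin T → X → (W →L[ℝ] ℝ)) (hhmeas : ∀ t, Measurable (h t))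
    (hdist : ∀ t, ⨅ h' ∈ Hl, essSup (fun x => (‖h t x - h' x‖₊ : ℝ≥0∞)) μ
      ≤ ENNReal.ofReal (b t))
    {Ω : Type*} [MeasurableSpace Ω] (P : Measure Ω) [IsProbabilityMeasure P]
    (x : Fin T → Ω → X) (hxmeas : ∀ t, Measurable (x t))
    (hxlaw : ∀ t, P.map (x t) = μ)
    (hxindep : iIndepFun x P)
    (q : Fin T → Ω → ℝ) (hqmeas : ∀ t, Measurable (q t))
    (hq01 : ∀ t ω, q t ω = 0 ∨ q t ω = 1)
    (hqlaw : ∀ t, P {ω | q t ω = 1} = ENNReal.ofReal ptil) :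
    (∫ ω, (∑ t : Fin T, if nuS V (h t (x t ω)) < b t then (1 : ℝ) else q t ω) ∂P)
      ≤ ptil * T + ∑ t : Fin T,
          (μ {x' | sInf ((fun h' => nuS V (h' x')) '' Hstar) ≤ 2 * b t}).toReal := by
  classical
  have hν : Measurable (fun c : W →L[ℝ] ℝ => nuS V c) :=
    (Metric.continuous_infDist_pt (Degen V)).measurable
  have hAmeas : ∀ t : Fin T, MeasurableSet {x' : X | nuS V (h t x') < b t} := fun t =>
    measurableSet_lt (hν.comp (hhmeas t)) measurable_const
  have hBmeas : ∀ t : Fin T, MeasurableSet {ω | nuS V (h t (x t ω)) < b t} := fun t =>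
    (hxmeas t) (hAmeas t)
  have hQmeas : ∀ t : Fin T, MeasurableSet {ω | q t ω = 1} := fun t =>
    (hqmeas t) (measurableSet_singleton 1)
  have hq_nonneg : ∀ t ω, 0 ≤ q t ω := by
    intro t ω; rcases hq01 t ω with h0 | h0 <;> rw [h0] <;> norm_num
  have hbdd : ∀ x' : X, BddBelow ((fun h' => nuS V (h' x')) '' Hstar) := by
    intro x'
    refine ⟨0, ?_⟩
    rintro y ⟨h', -, rfl⟩
    exact Metric.infDist_nonneg
  have key : ∀ t : Fin T, ∀ᵐ x' ∂μ,
      sInf ((fun h' => nuS V (h' x')) '' Hstar) ≤ nuS V (h t x') + b t := by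
    intro t
    have hseq : ∀ n : ℕ, ∃ h', h' ∈ Hl ∧ essSup (fun x => (‖h t x - h' x‖₊ : ℝ≥0∞)) μ
        < ENNReal.ofReal (b t + 1 / (n + 1)) := by
      intro n
      have hpos : (0:ℝ) < 1 / (n + 1) := by positivity
      have h1 : ENNReal.ofReal (b t) < ENNReal.ofReal (b t + 1 / (n + 1)) :=
        (ENNReal.ofReal_lt_ofReal_iff (by linarith [hb t])).mpr (by linarith)
      have h2 := lt_of_le_of_lt (hdist t) h1
      simpa [iInf_lt_iff] using h2
    choose g hgH hg using hseq
    have hae : ∀ᵐ x' ∂μ, ∀ n : ℕ,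
        (‖h t x' - g n x'‖₊ : ℝ≥0∞) ≤ essSup (fun x => (‖h t x - g n x‖₊ : ℝ≥0∞)) μ :=
      ae_all_iff.mpr fun n => ENNReal.ae_le_essSup _
    filter_upwards [hae] with x' hx'
    have hlt : ∀ n : ℕ, ‖h t x' - g n x'‖ < b t + 1 / (n + 1) := by
      intro n
      have h3 := lt_of_le_of_lt (hx' n) (hg n)
      rw [← ENNReal.ofReal_coe_nnreal, coe_nnnorm] at h3
      exact (ENNReal.ofReal_lt_ofReal_iff_of_nonneg (norm_nonneg _)).mp h3
    have hstep : ∀ n : ℕ,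
        sInf ((fun h' => nuS V (h' x')) '' Hstar) ≤ nuS V (h t x') + b t + 1 / (n + 1) := by
      intro n
      have h1 : sInf ((fun h' => nuS V (h' x')) '' Hstar) ≤ nuS V (g n x') :=
        csInf_le (hbdd x') ⟨g n, hsub (hgH n), rfl⟩
      have h2 : nuS V (g n x') ≤ nuS V (h t x') + dist (g n x') (h t x') :=
        Metric.infDist_le_infDist_add_dist
      have h3 : dist (g n x') (h t x') < b t + 1 / (n + 1) := by
        rw [dist_eq_norm, norm_sub_rev]; exact hlt n
      linarith
    have htend : Filter.Tendsto (fun n : ℕ => nuS V (h t x') + b t + 1 / (n + 1))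
        Filter.atTop (nhds (nuS V (h t x') + b t)) := by
      have h4 := tendsto_one_div_add_atTop_nhds_zero_nat (𝕜 := ℝ)
      simpa using (tendsto_const_nhds.add h4 :
        Filter.Tendsto (fun n : ℕ => (nuS V (h t x') + b t) + 1 / (n + 1))
          Filter.atTop (nhds ((nuS V (h t x') + b t) + 0)))
    exact ge_of_tendsto' htend hstep
  have hμ_le : ∀ t : Fin T, μ {x' | nuS V (h t x') < b t}
      ≤ μ {x' | sInf ((fun h' => nuS V (h' x')) '' Hstar) ≤ 2 * b t} := by
    intro t
    apply measure_mono_ae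
    filter_upwards [key t] with x' hx' hmem
    have hmem' : nuS V (h t x') < b t := hmem
    show sInf ((fun h' => nuS V (h' x')) '' Hstar) ≤ 2 * b t
    linarith
  have hP_eq : ∀ t : Fin T,
      P {ω | nuS V (h t (x t ω)) < b t} = μ {x' | nuS V (h t x') < b t} := by
    intro t
    rw [← hxlaw t, Measure.map_apply (hxmeas t) (hAmeas t)]
    rfl
  have hI_int : ∀ t : Fin T,
      Integrable (fun ω => if nuS V (h t (x t ω)) < b t then (1:ℝ) else 0) P := by
    intro t
    have h1 : (fun ω => if nuS V (h t (x t ω)) < b t then (1:ℝ) else 0)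
        = Set.indicator {ω | nuS V (h t (x t ω)) < b t} (fun _ => (1:ℝ)) := by
      funext ω; simp [Set.indicator_apply]
    rw [h1]
    exact (integrable_const 1).indicator (hBmeas t)
  have hI_val : ∀ t : Fin T, ∫ ω, (if nuS V (h t (x t ω)) < b t then (1:ℝ) else 0) ∂P
      = (P {ω | nuS V (h t (x t ω)) < b t}).toReal := by
    intro t
    have h1 : (fun ω => if nuS V (h t (x t ω)) < b t then (1:ℝ) else 0)
        = Set.indicator {ω | nuS V (h t (x t ω)) < b t} (fun _ => (1:ℝ)) := by
      funext ω; simp [Set.indicator_apply]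
    rw [h1, integral_indicator_const _ (hBmeas t)]
    simp [measureReal_def]
  have hq_eq_ind : ∀ t : Fin T, q t = Set.indicator {ω | q t ω = 1} (fun _ => (1:ℝ)) := by
    intro t; funext ω
    rcases hq01 t ω with h0 | h1
    · simp [Set.indicator_apply, h0]
    · simp [Set.indicator_apply, h1]
  have hq_int : ∀ t : Fin T, Integrable (q t) P := by
    intro t; rw [hq_eq_ind t]; exact (integrable_const 1).indicator (hQmeas t)
  have hq_val : ∀ t : Fin T, ∫ ω, q t ω ∂P = ptil := by
    intro t
    have h1 : ∫ ω, q t ω ∂P = ∫ ω, Set.indicator {ω' | q t ω' = 1} (fun _ => (1:ℝ)) ω ∂P := by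
      congr 1; exact hq_eq_ind t
    rw [h1, integral_indicator_const _ (hQmeas t), measureReal_def, hqlaw t]
    simp [ENNReal.toReal_ofReal hptil0]
  have hf_int : Integrable
      (fun ω => ∑ t : Fin T, if nuS V (h t (x t ω)) < b t then (1:ℝ) else q t ω) P := by
    apply integrable_finset_sum
    intro t _
    have h1 : (fun ω => if nuS V (h t (x t ω)) < b t then (1:ℝ) else q t ω)
        = fun ω => Set.indicator {ω' | nuS V (h t (x t ω')) < b t} (fun _ => (1:ℝ)) ω
          + Set.indicator ({ω' | nuS V (h t (x t ω')) < b t})ᶜ (q t) ω := by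
      funext ω
      by_cases hc : nuS V (h t (x t ω)) < b t <;>
        simp [Set.indicator_apply, hc]
    rw [h1]
    exact ((integrable_const 1).indicator (hBmeas t)).add
      ((hq_int t).indicator (hBmeas t).compl)
  have hg_int : Integrable (fun ω => ∑ t : Fin T,
      (q t ω + if nuS V (h t (x t ω)) < b t then (1:ℝ) else 0)) P :=
    integrable_finset_sum _ fun t _ => (hq_int t).add (hI_int t)
  have hfg : ∀ ω, (∑ t : Fin T, if nuS V (h t (x t ω)) < b t then (1:ℝ) else q t ω)
      ≤ ∑ t : Fin T, (q t ω + if nuS V (h t (x t ω)) < b t then (1:ℝ) else 0) := by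
    intro ω
    apply Finset.sum_le_sum
    intro t _
    by_cases hc : nuS V (h t (x t ω)) < b t
    · simp only [hc, if_true]
      linarith [hq_nonneg t ω]
    · simp [hc]
  calc (∫ ω, (∑ t : Fin T, if nuS V (h t (x t ω)) < b t then (1 : ℝ) else q t ω) ∂P)
      ≤ ∫ ω, (∑ t : Fin T, (q t ω + if nuS V (h t (x t ω)) < b t then (1:ℝ) else 0)) ∂P :=
        integral_mono hf_int hg_int hfg
    _ = ∑ t : Fin T, ∫ ω, (q t ω + if nuS V (h t (x t ω)) < b t then (1:ℝ) else 0) ∂P :=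
        integral_finset_sum Finset.univ
          (f := fun (t : Fin T) ω => q t ω + if nuS V (h t (x t ω)) < b t then (1:ℝ) else 0)
          (fun t _ => (hq_int t).add (hI_int t))
    _ = ∑ t : Fin T, (∫ ω, q t ω ∂P + ∫ ω, (if nuS V (h t (x t ω)) < b t then (1:ℝ) else 0) ∂P) :=
        Finset.sum_congr rfl fun t _ => integral_add (hq_int t) (hI_int t)
    _ = ∑ t : Fin T, (ptil + (μ {x' | nuS V (h t x') < b t}).toReal) := by
        refine Finset.sum_congr rfl fun t _ => ?_
        rw [hq_val t, hI_val t, hP_eq t]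
    _ = ptil * T + ∑ t : Fin T, (μ {x' | nuS V (h t x') < b t}).toReal := by
        rw [Finset.sum_add_distrib, Finset.sum_const, Finset.card_univ, Fintype.card_fin]
        simp [nsmul_eq_mul, mul_comm]
    _ ≤ ptil * T + ∑ t : Fin T,
          (μ {x' | sInf ((fun h' => nuS V (h' x')) '' Hstar) ≤ 2 * b t}).toReal := by
        refine add_le_add_right (Finset.sum_le_sum fun t _ => ?_) _
        exact ENNReal.toReal_mono (measure_ne_top μ _) (hμ_le t)
end

section
/- Assume the oracle takes vertex values: w*(c) ∈ V for every c ∈ W*. Let X be a nonempty finite set, p : X → [0,1] with Σ_{x∈X} p(x) = 1, and c̄ : X → W* (the conditional mean cost function, c̄(x) = E[c | x]). Let H be a set of functions X → W* with c̄ ∈ H (well-specified hypothesis class) and sup_{h∈H, x∈X} ‖h(x)‖ ≤ ρ for some finite ρ. Define the excess SPO risk Exc(h) := Σ_{x∈X} p(x)·( c̄(x)(w*(h(x))) − min_{w∈S} c̄(x)(w) ), and H* := {h ∈ H : Exc(h) = 0} (the SPO-risk minimizers; Exc(c̄) = 0, so H* is nonempty). Suppose that for every x with p(x) > 0 the cost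 vector c̄(x) has a unique minimizer over S (non-degeneracy of the expectation). Then there exists a constant k > 0 such that for every h ∈ H and every ε > 0: Exc(h) ≤ ε implies inf_{h′∈H*} max_{x : p(x) > 0} ‖h(x) − h′(x)‖ ≤ k·√ε. That is, the error-bound condition (Assumption 1) holds for the SPO loss with φ(ε) = k√ε. -/
open MeasureTheory

variable {W : Type*} [NormedAddCommGroup W] [NormedSpace ℝ W] [FiniteDimensional ℝ W]

/-- The excess SPO risk of a predictor `h` for the finite-feature setting:
`Exc(h) = Σ_x p(x)·(c̄(x)(w*(h(x))) − min_{w∈S} c̄(x)(w))`. -/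
noncomputable def ExcSPO (V : Set W) (wstar : (W →L[ℝ] ℝ) → W) {X : Type*} [Fintype X]
    (p : X → ℝ) (cbar : X → (W →L[ℝ] ℝ)) (h : X → (W →L[ℝ] ℝ)) : ℝ :=
  ∑ x, p x * (cbar x (wstar (h x)) - sInf ((fun w => cbar x w) '' convexHull ℝ V))

/-- In a well-specified finite-feature setting where the oracle takes vertex values and
`c̄(x)` has a unique minimizer over `S` for every feature with positive probability, there
is `k > 0` such that excess SPO risk at most `ε` forces the sup-distance (over features of
positive probability) from `h` to the set of SPO-risk minimizers to be at most `k√ε`;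
i.e., the error-bound condition holds with `φ(ε) = k√ε`. -/
theorem stmt_10 {X : Type*} [Fintype X] [Nonempty X]
    (V : Set W) (hVfin : V.Finite) (hVne : V.Nonempty)
    (wstar : (W →L[ℝ] ℝ) → W) (hwstar : ∀ c, wstar c ∈ Opt V c)
    (hvertex : ∀ c, wstar c ∈ V)
    (p : X → ℝ) (hp0 : ∀ x, 0 ≤ p x) (hp1 : ∀ x, p x ≤ 1) (hpsum : ∑ x, p x = 1)
    (cbar : X → (W →L[ℝ] ℝ))
    (H : Set (X → (W →L[ℝ] ℝ))) (hcbarH : cbar ∈ H)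
    (ρ : ℝ) (hρ : ∀ h ∈ H, ∀ x, ‖h x‖ ≤ ρ)
    (hunique : ∀ x, 0 < p x → ∃! w, w ∈ Opt V (cbar x)) :
    ∃ k : ℝ, 0 < k ∧ ∀ h ∈ H, ∀ ε : ℝ, 0 < ε → ExcSPO V wstar p cbar h ≤ ε →
      sInf ((fun h' => sSup ((fun x => ‖h x - h' x‖) '' {x | 0 < p x})) ''
          {h' ∈ H | ExcSPO V wstar p cbar h' = 0})
        ≤ k * Real.sqrt ε := by
  classical
  have hVS : V ⊆ convexHull ℝ V := subset_convexHull ℝ V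
  have hSne : (convexHull ℝ V).Nonempty := hVne.mono hVS
  have hlb : ∀ c : W →L[ℝ] ℝ, ∀ w ∈ convexHull ℝ V, c (wstar c) ≤ c w :=
    fun c w hw => (hwstar c).2 w hw
  have hInfEq : ∀ c : W →L[ℝ] ℝ,
      sInf ((fun w => c w) '' convexHull ℝ V) = c (wstar c) := by
    intro c
    refine IsLeast.csInf_eq ⟨⟨wstar c, (hwstar c).1, rfl⟩, ?_⟩
    rintro y ⟨w, hw, rfl⟩
    exact hlb c w hw
  have hmle : ∀ x : X, ∀ w ∈ convexHull ℝ V,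
      sInf ((fun w => cbar x w) '' convexHull ℝ V) ≤ cbar x w := by
    intro x w hw
    rw [hInfEq (cbar x)]
    exact hlb (cbar x) w hw
  -- nonnegativity of terms
  have hterm_nonneg : ∀ (h : X → (W →L[ℝ] ℝ)) (x : X),
      0 ≤ p x * (cbar x (wstar (h x)) - sInf ((fun w => cbar x w) '' convexHull ℝ V)) := by
    intro h x
    exact mul_nonneg (hp0 x) (sub_nonneg.2 (hmle x _ (hVS (hvertex (h x)))))
  have hExc_nonneg : ∀ h : X → (W →L[ℝ] ℝ), 0 ≤ ExcSPO V wstar p cbar h := by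
    intro h
    exact Finset.sum_nonneg fun x _ => hterm_nonneg h x
  -- cbar has zero excess risk
  have hExc_cbar : ExcSPO V wstar p cbar cbar = 0 := by
    apply Finset.sum_eq_zero
    intro x _
    rw [hInfEq (cbar x)]
    ring
  -- ρ is nonnegative
  obtain ⟨x0⟩ := ‹Nonempty X›
  have hρ0 : (0:ℝ) ≤ ρ := le_trans (norm_nonneg (cbar x0)) (hρ cbar hcbarH x0)
  -- there is a feature with positive probability
  have hPne : {x : X | 0 < p x}.Nonempty := by
    by_contra hc
    have : ∑ x, p x = 0 := Finset.sum_eq_zero fun x _ => by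
      refine le_antisymm ?_ (hp0 x)
      by_contra h'
      exact hc ⟨x, not_le.1 h'⟩
    rw [hpsum] at this; norm_num at this
  -- the gap constant δ
  set T : Finset (X × W) := (Finset.univ ×ˢ hVfin.toFinset).filter
    (fun q => 0 < p q.1 ∧ sInf ((fun w => cbar q.1 w) '' convexHull ℝ V) < cbar q.1 q.2)
    with hTdef
  set δ : ℝ := if hTne : T.Nonempty then
      T.inf' hTne (fun q => p q.1 * (cbar q.1 q.2 -
        sInf ((fun w => cbar q.1 w) '' convexHull ℝ V)))
    else 1 with hδdef
  have hδpos : 0 < δ := by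
    rw [hδdef]
    split_ifs with hTne
    · rw [Finset.lt_inf'_iff]
      rintro ⟨x, v⟩ hq
      rw [hTdef, Finset.mem_filter] at hq
      exact mul_pos hq.2.1 (sub_pos.2 hq.2.2)
    · exact one_pos
  -- positive excess risk is at least δ
  have hgap : ∀ h : X → (W →L[ℝ] ℝ), ExcSPO V wstar p cbar h ≠ 0 →
      δ ≤ ExcSPO V wstar p cbar h := by
    intro h hne
    have hpos : 0 < ExcSPO V wstar p cbar h := lt_of_le_of_ne (hExc_nonneg h) (Ne.symm hne)
    have hex : ∃ x : X, 0 < p x * (cbar x (wstar (h x)) -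
        sInf ((fun w => cbar x w) '' convexHull ℝ V)) := by
      by_contra hc
      push_neg at hc
      have : ExcSPO V wstar p cbar h ≤ 0 :=
        Finset.sum_nonpos fun x _ => hc x
      exact absurd (lt_of_lt_of_le hpos this) (lt_irrefl 0)
    obtain ⟨x, hx⟩ := hex
    have hpx : 0 < p x := by
      rcases lt_or_eq_of_le (hp0 x) with h' | h'
      · exact h'
      · rw [← h', zero_mul] at hx
        exact absurd hx (lt_irrefl 0)
    have hgt : sInf ((fun w => cbar x w) '' convexHull ℝ V) < cbar x (wstar (h x)) := by
      by_contra hg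
      push_neg at hg
      nlinarith [mul_nonneg (hp0 x) (sub_nonneg.2 hg), hx]
    have hqmem : (x, wstar (h x)) ∈ T := by
      rw [hTdef, Finset.mem_filter]
      exact ⟨Finset.mem_product.2 ⟨Finset.mem_univ x, hVfin.mem_toFinset.2 (hvertex (h x))⟩,
        hpx, hgt⟩
    have hTne : T.Nonempty := ⟨_, hqmem⟩
    have hδle : δ ≤ p x * (cbar x (wstar (h x)) -
        sInf ((fun w => cbar x w) '' convexHull ℝ V)) := by
      rw [hδdef, dif_pos hTne]
      exact Finset.inf'_le _ hqmem
    refine le_trans hδle ?_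
    exact Finset.single_le_sum (fun y _ => hterm_nonneg h y) (Finset.mem_univ x)
  -- the constant k
  refine ⟨(2 * ρ + 1) / Real.sqrt δ, by positivity, ?_⟩
  intro h hH ε hε hExc
  have hbddA : BddBelow ((fun h' => sSup ((fun x => ‖h x - h' x‖) '' {x | 0 < p x})) ''
      {h' ∈ H | ExcSPO V wstar p cbar h' = 0}) := by
    refine ⟨0, ?_⟩
    rintro y ⟨h', _, rfl⟩
    exact Real.sSup_nonneg (by rintro z ⟨x, _, rfl⟩; exact norm_nonneg _)
  by_cases hE : ExcSPO V wstar p cbar h = 0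
  · -- h itself is a minimizer; distance 0
    have hmem : sSup ((fun x => ‖h x - h x‖) '' {x | 0 < p x}) ∈
        ((fun h' => sSup ((fun x => ‖h x - h' x‖) '' {x | 0 < p x})) ''
          {h' ∈ H | ExcSPO V wstar p cbar h' = 0}) :=
      ⟨h, ⟨hH, hE⟩, rfl⟩
    have hsup0 : sSup ((fun x => ‖h x - h x‖) '' {x | 0 < p x}) ≤ 0 := by
      apply Real.sSup_le
      · rintro z ⟨x, _, rfl⟩; simp
      · exact le_rfl
    calc sInf _ ≤ sSup ((fun x => ‖h x - h x‖) '' {x | 0 < p x}) := csInf_le hbddA hmem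
      _ ≤ 0 := hsup0
      _ ≤ (2 * ρ + 1) / Real.sqrt δ * Real.sqrt ε := by positivity
  · -- excess risk positive, so δ ≤ ε
    have hδε : δ ≤ ε := le_trans (hgap h hE) hExc
    have hmem : sSup ((fun x => ‖h x - cbar x‖) '' {x | 0 < p x}) ∈
        ((fun h' => sSup ((fun x => ‖h x - h' x‖) '' {x | 0 < p x})) ''
          {h' ∈ H | ExcSPO V wstar p cbar h' = 0}) :=
      ⟨cbar, ⟨hcbarH, hExc_cbar⟩, rfl⟩
    have hsup : sSup ((fun x => ‖h x - cbar x‖) '' {x | 0 < p x}) ≤ 2 * ρ := by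
      apply Real.sSup_le
      · rintro z ⟨x, _, rfl⟩
        calc ‖h x - cbar x‖ ≤ ‖h x‖ + ‖cbar x‖ := norm_sub_le _ _
          _ ≤ ρ + ρ := add_le_add (hρ h hH x) (hρ cbar hcbarH x)
          _ = 2 * ρ := by ring
      · linarith
    have hsqrt : Real.sqrt δ ≤ Real.sqrt ε := Real.sqrt_le_sqrt hδε
    have hkey : 2 * ρ + 1 = (2 * ρ + 1) / Real.sqrt δ * Real.sqrt δ := by
      rw [div_mul_cancel₀]
      exact ne_of_gt (Real.sqrt_pos.2 hδpos)
    calc sInf _ ≤ sSup ((fun x => ‖h x - cbar x‖) '' {x | 0 < p x}) := csInf_le hbddA hmem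
      _ ≤ 2 * ρ := hsup
      _ ≤ 2 * ρ + 1 := by linarith
      _ = (2 * ρ + 1) / Real.sqrt δ * Real.sqrt δ := hkey
      _ ≤ (2 * ρ + 1) / Real.sqrt δ * Real.sqrt ε := by
          apply mul_le_mul_of_nonneg_left hsqrt
          positivity
end
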